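/- arXiv:2309.09791 — 5 statements merged into one kernel-verified Lean document; each statement's English description precedes it below -/
import Mathlib

section
/- Let G and H be nonzero formal power series in ℝ[[ρ,θ]] with supports Δ(G), Δ(H) ⊆ ℤ≥0². Then the lower convex semi-hull of the support of the product satisfies ℘(Δ(G·H)) = ℘(Δ(G)) + ℘(Δ(H)) (Minkowski sum of the lower convex semi-hulls). -/
open scoped Pointwise

/-- The coefficient of `ρ^i θ^j` in a formal power series in two variables over `ℝ`. -/
noncomputable def coef (F : MvPowerSeries (Fin 2) ℝ) (p : ℕ × ℕ) : ℝ :=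
  MvPowerSeries.coeff (R := ℝ) (Finsupp.single (0 : Fin 2) p.1 + Finsupp.single (1 : Fin 2) p.2) F

/-- The support (valid index set) `Δ(F)` of a power series. -/
noncomputable def suppSet (F : MvPowerSeries (Fin 2) ℝ) : Set (ℕ × ℕ) :=
  {p | coef F p ≠ 0}

/-- Embedding of lattice indices into `ℝ²`. -/
noncomputable def embed (p : ℕ × ℕ) : ℝ × ℝ := ((p.1 : ℝ), (p.2 : ℝ))

/-- The lower convex semi-hull `℘(S) = conv(S + ℝ≥0²)` of a set of lattice points. -/
noncomputable def lsh (S : Set (ℕ × ℕ)) : Set (ℝ × ℝ) :=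
  convexHull ℝ (embed '' S + {q : ℝ × ℝ | 0 ≤ q.1 ∧ 0 ≤ q.2})

/-!
If `a ∈ Δ(G)`, `b ∈ Δ(H)` but `a + b ∉ ℘(Δ(GH))`, separate the point from this convex set, which
is closed because by Dickson's lemma `℘(S) = conv(M) + ℝ≥0²` for the finitely many minimal
elements `M` of `S`. As `℘` is stable under adding `ℝ≥0²`, the separating functional `f` is
monotone. Ordering exponents by `f`, with ties broken lexicographically, is a total order
compatible with addition, so `Δ(G)` and `Δ(H)` have least elements `u`, `v`, and `u + v` has a
single decomposition in `Δ(G) + Δ(H)`. Hence the coefficient of `GH` at `u + v` is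
`G_u H_v ≠ 0`, yet `f (u + v) ≤ f (a + b)`, contradicting the separation. The reverse inclusion
comes from `Δ(GH) ⊆ Δ(G) + Δ(H)` and `℘(A + B) = ℘(A) + ℘(B)`.
-/

open Set

theorem Set.Ici_zero_add_Ici_zero {α : Type*} [AddZeroClass α] [Preorder α] [AddLeftMono α]
    [AddRightMono α] : (Ici 0 : Set α) + Ici 0 = Ici 0 :=
  (Ici_add_Ici_subset 0 0).trans_eq (by rw [add_zero]) |>.antisymm
    fun x hx => ⟨x, hx, 0, le_rfl, add_zero x⟩

theorem exists_forall_le_of_monotone {α β : Type*} [Preorder α] [WellQuasiOrderedLE α]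
    [LinearOrder β] {f : α → β} (hf : Monotone f) {s : Set α} (hs : s.Nonempty) :
    ∃ a ∈ s, ∀ b ∈ s, f a ≤ f b := by
  obtain ⟨a, ha, hmin⟩ :=
    IsPWO.exists_minimalFor f s ((isPWO_of_wellQuasiOrderedLE s).image_of_monotone hf) hs
  exact ⟨a, ha, fun b hb => (le_total (f a) (f b)).elim id (hmin hb)⟩

theorem eq_and_eq_of_add_eq_of_le {M N : Type*} [Add M] [Add N] [PartialOrder N]
    [AddLeftStrictMono N] [AddRightStrictMono N] {key : M → N} (hinj : Function.Injective key)
    (hadd : ∀ a b, key (a + b) = key a + key b) {s t u v : M} (hus : key u ≤ key s)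
    (hvt : key v ≤ key t) (h : s + t = u + v) : s = u ∧ t = v := by
  obtain ⟨hu, hv⟩ := (add_eq_add_iff_eq_and_eq hus hvt).1 (by rw [← hadd, ← hadd, h])
  exact ⟨hinj hu.symm, hinj hv.symm⟩

theorem nonneg_of_forall_lt_add_mul {a b c : ℝ} (h : ∀ t : ℝ, 0 ≤ t → c < a + t * b) :
    0 ≤ b := by
  by_contra! hb
  have hca : c < a := by simpa using h 0 le_rfl
  have hcancel : (a - c) / -b * b = c - a := by field_simp [hb.ne]; ring
  have := h ((a - c) / -b) (div_nonneg (by linarith) (by linarith))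
  linarith

namespace MvPowerSeries

variable {σ R : Type*} [Semiring R]

theorem support_mul_subset (φ ψ : MvPowerSeries σ R) :
    (φ * ψ).support ⊆ φ.support + ψ.support := by
  classical
  intro d hd
  have hd : coeff d (φ * ψ) ≠ 0 := hd
  rw [coeff_mul] at hd
  obtain ⟨⟨s, t⟩, hst, hne⟩ := Finset.exists_ne_zero_of_sum_ne_zero hd
  exact ⟨s, left_ne_zero_of_mul hne, t, right_ne_zero_of_mul hne,
    Finset.HasAntidiagonal.mem_antidiagonal.1 hst⟩

theorem coeff_add_mul_of_unique_add {φ ψ : MvPowerSeries σ R} {p q : σ →₀ ℕ}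
    (h : ∀ u ∈ φ.support, ∀ v ∈ ψ.support, u + v = p + q → u = p ∧ v = q) :
    coeff (p + q) (φ * ψ) = coeff p φ * coeff q ψ := by
  classical
  rw [coeff_mul, Finset.sum_eq_single_of_mem (p, q) (by simp)]
  rintro ⟨u, v⟩ huv hne
  by_contra hnz
  obtain ⟨rfl, rfl⟩ :=
    h u (left_ne_zero_of_mul hnz) v (right_ne_zero_of_mul hnz)
      (Finset.HasAntidiagonal.mem_antidiagonal.1 huv)
  exact hne rfl

end MvPowerSeries

noncomputable def exponentEquiv : ℕ × ℕ ≃+ (Fin 2 →₀ ℕ) where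
  toFun p := Finsupp.single 0 p.1 + Finsupp.single 1 p.2
  invFun d := (d 0, d 1)
  left_inv p := by simp
  right_inv d := by ext i; fin_cases i <;> simp
  map_add' p q := by simp only [Prod.fst_add, Prod.snd_add, Finsupp.single_add]; abel

theorem exponentEquiv_symm_mem_suppSet {F : MvPowerSeries (Fin 2) ℝ} {d : Fin 2 →₀ ℕ}
    (hd : d ∈ F.support) : exponentEquiv.symm d ∈ suppSet F := by
  show MvPowerSeries.coeff (exponentEquiv (exponentEquiv.symm d)) F ≠ 0
  rwa [AddEquiv.apply_symm_apply]

theorem suppSet_mul_subset (G H : MvPowerSeries (Fin 2) ℝ) :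
    suppSet (G * H) ⊆ suppSet G + suppSet H := by
  intro p hp
  obtain ⟨s, hs, t, ht, hst⟩ := MvPowerSeries.support_mul_subset G H hp
  refine ⟨exponentEquiv.symm s, exponentEquiv_symm_mem_suppSet hs,
    exponentEquiv.symm t, exponentEquiv_symm_mem_suppSet ht, exponentEquiv.injective ?_⟩
  change s + t = exponentEquiv p at hst
  simpa using hst

theorem add_mem_suppSet_mul {G H : MvPowerSeries (Fin 2) ℝ} {u v : ℕ × ℕ}
    (hu : u ∈ suppSet G) (hv : v ∈ suppSet H)
    (huniq : ∀ s ∈ suppSet G, ∀ t ∈ suppSet H, s + t = u + v → s = u ∧ t = v) :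
    u + v ∈ suppSet (G * H) := by
  have hcoef : coef (G * H) (u + v) = coef G u * coef H v := by
    refine (congrArg (MvPowerSeries.coeff · (G * H)) (map_add exponentEquiv u v)).trans
      (MvPowerSeries.coeff_add_mul_of_unique_add fun s hs t ht hst => ?_)
    obtain ⟨rfl, rfl⟩ := huniq _ (exponentEquiv_symm_mem_suppSet hs)
      _ (exponentEquiv_symm_mem_suppSet ht)
      (by rw [← map_add, hst, ← map_add, AddEquiv.symm_apply_apply])
    simp
  change coef (G * H) (u + v) ≠ 0
  rw [hcoef]
  exact mul_ne_zero hu hv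

theorem embed_add (p q : ℕ × ℕ) : embed (p + q) = embed p + embed q := by
  simp [embed]

theorem embed_mono : Monotone embed :=
  fun _ _ h => ⟨Nat.cast_le.2 h.1, Nat.cast_le.2 h.2⟩

theorem image_embed_add (A B : Set (ℕ × ℕ)) : embed '' (A + B) = embed '' A + embed '' B :=
  image_add (AddMonoidHom.mk' embed embed_add)

theorem lsh_eq (S : Set (ℕ × ℕ)) : lsh S = convexHull ℝ (embed '' S + Ici 0) := rfl

theorem embed_mem_lsh {S : Set (ℕ × ℕ)} {p : ℕ × ℕ} (hp : p ∈ S) : embed p ∈ lsh S :=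
  subset_convexHull ℝ _ ⟨embed p, mem_image_of_mem _ hp, 0, ⟨le_rfl, le_rfl⟩, add_zero _⟩

theorem lsh_add (A B : Set (ℕ × ℕ)) : lsh (A + B) = lsh A + lsh B := by
  rw [lsh_eq, lsh_eq, lsh_eq, ← convexHull_add, image_embed_add, add_add_add_comm,
    Ici_zero_add_Ici_zero]

theorem lsh_add_Ici (S : Set (ℕ × ℕ)) : lsh S + Ici 0 = lsh S :=
  calc lsh S + Ici 0 = convexHull ℝ (embed '' S + Ici 0) + convexHull ℝ (Ici 0) := by
        rw [(convex_Ici 0).convexHull_eq, lsh_eq]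
    _ = lsh S := by rw [← convexHull_add, add_assoc, Ici_zero_add_Ici_zero, lsh_eq]

theorem lsh_mono {S T : Set (ℕ × ℕ)} (h : S ⊆ T) : lsh S ⊆ lsh T :=
  convexHull_mono (add_subset_add_right (image_mono h))

theorem lsh_subset_of_forall_embed_mem {S T : Set (ℕ × ℕ)} (h : ∀ p ∈ S, embed p ∈ lsh T) :
    lsh S ⊆ lsh T :=
  convexHull_min (lsh_add_Ici T ▸ add_subset_add_right (image_subset_iff.2 h))
    (convex_convexHull ℝ _)

theorem lsh_eq_of_forall_exists_le {S M : Set (ℕ × ℕ)} (hMS : M ⊆ S)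
    (h : ∀ s ∈ S, ∃ m ∈ M, m ≤ s) : lsh S = lsh M := by
  refine (lsh_subset_of_forall_embed_mem fun s hs => ?_).antisymm (lsh_mono hMS)
  obtain ⟨m, hm, hms⟩ := h s hs
  rw [← lsh_add_Ici]
  exact ⟨embed m, embed_mem_lsh hm, embed s - embed m, sub_nonneg.2 (embed_mono hms),
    add_sub_cancel _ _⟩

theorem isClosed_lsh_of_finite {M : Set (ℕ × ℕ)} (hM : M.Finite) : IsClosed (lsh M) := by
  rw [lsh_eq, convexHull_add, (convex_Ici 0).convexHull_eq]
  exact isClosed_Ici.add_left_of_isCompact ((hM.image embed).isCompact_convexHull (𝕜 := ℝ))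

theorem isClosed_lsh (S : Set (ℕ × ℕ)) : IsClosed (lsh S) := by
  rw [lsh_eq_of_forall_exists_le (M := {p | Minimal (· ∈ S) p}) (fun _ hp => hp.1)]
  · exact isClosed_lsh_of_finite
      (WellQuasiOrderedLE.finite_of_isAntichain (setOfPred_minimal_antichain _))
  · intro s hs
    obtain ⟨m, hms, hm⟩ := (isPWO_of_wellQuasiOrderedLE S).exists_le_minimal hs
    exact ⟨m, hm, hms⟩

theorem exists_monotone_lt_of_notMem_lsh {S : Set (ℕ × ℕ)} {x : ℝ × ℝ} (hx : x ∉ lsh S) :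
    ∃ f : ℝ × ℝ →L[ℝ] ℝ, Monotone f ∧ ∀ s ∈ S, f x < f (embed s) := by
  obtain ⟨f, c, hfx, hf⟩ :=
    geometric_hahn_banach_point_closed (convex_convexHull ℝ _) (isClosed_lsh S) hx
  rcases S.eq_empty_or_nonempty with rfl | ⟨s₀, hs₀⟩
  · exact ⟨0, monotone_const, by simp⟩
  refine ⟨f, fun y z hyz => ?_, fun s hs => hfx.trans (hf _ (embed_mem_lsh hs))⟩
  have hmem (t : ℝ) (ht : 0 ≤ t) : embed s₀ + t • (z - y) ∈ lsh S :=
    lsh_add_Ici S ▸ add_mem_add (embed_mem_lsh hs₀) (smul_nonneg ht (sub_nonneg.2 hyz))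
  exact sub_nonneg.1 (nonneg_of_forall_lt_add_mul fun t ht => by simpa using hf _ (hmem t ht))

noncomputable def lexKey (f : ℝ × ℝ →L[ℝ] ℝ) (p : ℕ × ℕ) : ℝ ×ₗ ℕ ×ₗ ℕ :=
  toLex (f (embed p), toLex p)

theorem lexKey_add (f : ℝ × ℝ →L[ℝ] ℝ) (p q : ℕ × ℕ) :
    lexKey f (p + q) = lexKey f p + lexKey f q := by
  simp [lexKey, embed_add, ← toLex_add]

theorem lexKey_injective (f : ℝ × ℝ →L[ℝ] ℝ) : Function.Injective (lexKey f) :=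
  fun p q h => by
    simp only [lexKey, toLex_inj, Prod.mk.injEq] at h
    exact h.2

theorem lexKey_mono {f : ℝ × ℝ →L[ℝ] ℝ} (hf : Monotone f) : Monotone (lexKey f) := by
  intro p q hpq
  rcases (hf (embed_mono hpq)).lt_or_eq with hlt | heq
  · exact Prod.Lex.toLex_le_toLex.2 (Or.inl hlt)
  · exact Prod.Lex.toLex_le_toLex.2 (Or.inr ⟨heq, Prod.Lex.toLex_mono hpq⟩)

theorem embed_add_mem_lsh_suppSet_mul {G H : MvPowerSeries (Fin 2) ℝ} {a b : ℕ × ℕ}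
    (ha : a ∈ suppSet G) (hb : b ∈ suppSet H) : embed (a + b) ∈ lsh (suppSet (G * H)) := by
  by_contra hab
  obtain ⟨f, hf, hsep⟩ := exists_monotone_lt_of_notMem_lsh hab
  obtain ⟨u, hu, hu_min⟩ := exists_forall_le_of_monotone (lexKey_mono hf) ⟨a, ha⟩
  obtain ⟨v, hv, hv_min⟩ := exists_forall_le_of_monotone (lexKey_mono hf) ⟨b, hb⟩
  have huv : u + v ∈ suppSet (G * H) := add_mem_suppSet_mul hu hv fun s hs t ht hst =>
    eq_and_eq_of_add_eq_of_le (lexKey_injective f) (lexKey_add f) (hu_min s hs) (hv_min t ht) hst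
  have hle : f (embed (u + v)) ≤ f (embed (a + b)) := by
    simp only [embed_add, map_add]
    exact add_le_add (Prod.Lex.monotone_fst _ _ (hu_min a ha))
      (Prod.Lex.monotone_fst _ _ (hv_min b hb))
  exact (hsep _ huv).not_ge hle

theorem lsh_support_mul_general (G H : MvPowerSeries (Fin 2) ℝ) :
    lsh (suppSet (G * H)) = lsh (suppSet G) + lsh (suppSet H) := by
  rw [← lsh_add]
  refine (lsh_mono (suppSet_mul_subset G H)).antisymm (lsh_subset_of_forall_embed_mem ?_)
  rintro _ ⟨a, ha, b, hb, rfl⟩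
  exact embed_add_mem_lsh_suppSet_mul ha hb

/-- the lower convex semi-hull of the support of a product is the
Minkowski sum of the lower convex semi-hulls of the supports of the factors. -/
theorem lsh_support_mul (G H : MvPowerSeries (Fin 2) ℝ) (hG : G ≠ 0) (hH : H ≠ 0) :
    lsh (suppSet (G * H)) = lsh (suppSet G) + lsh (suppSet H) :=
  lsh_support_mul_general G H
end

section
/- Let G(θ) and H(θ) be real polynomials and suppose the Lie bracket [G,H] := G'·H − G·H' has no nonzero real roots. Then every nonzero real root of G is simple; moreover, G has at most one positive real root and at most one negative real root whenever H is a monomial α θ^ℓ with α ≠ 0 and ℓ ≥ 1. -/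
open Polynomial

lemma rolle_key (G : Polynomial ℝ) (ℓ : ℕ) (a b : ℝ) (hab : a < b)
    (h0 : ∀ x ∈ Set.Icc a b, x ≠ 0) (ha : G.IsRoot a) (hb : G.IsRoot b) :
    ∃ d ∈ Set.Ioo a b,
      eval d (derivative G) * d ^ ℓ - eval d G * ((ℓ : ℝ) * d ^ (ℓ - 1)) = 0 := by
  set f : ℝ → ℝ := fun x => G.eval x / x ^ ℓ with hf
  set f' : ℝ → ℝ := fun x =>
    (eval x (derivative G) * x ^ ℓ - eval x G * ((ℓ : ℝ) * x ^ (ℓ - 1))) / (x ^ ℓ) ^ 2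
    with hf'
  have hder : ∀ x : ℝ, x ≠ 0 → HasDerivAt f (f' x) x := fun x hx =>
    (G.hasDerivAt x).div (hasDerivAt_pow ℓ x) (pow_ne_zero _ hx)
  have hcont : ContinuousOn f (Set.Icc a b) := fun x hx =>
    ((hder x (h0 x hx)).differentiableAt.continuousAt).continuousWithinAt
  have hfab : f a = f b := by
    simp [hf, ha.eq_zero, hb.eq_zero]
  obtain ⟨d, hd, hd0⟩ := exists_hasDerivAt_eq_zero hab hcont hfab
    (fun x hx => hder x (h0 x (Set.mem_Icc_of_Ioo hx)))
  refine ⟨d, hd, ?_⟩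
  have hdne : d ≠ 0 := h0 d (Set.mem_Icc_of_Ioo hd)
  have hden : ((d : ℝ) ^ ℓ) ^ 2 ≠ 0 := pow_ne_zero _ (pow_ne_zero _ hdne)
  have : f' d = 0 := hd0
  rw [hf'] at this
  rcases div_eq_zero_iff.mp this with h | h
  · exact h
  · exact absurd h hden

/-- if the Lie bracket `[G,H] = G'·H − G·H'` has no nonzero real roots,
then every nonzero real root of `G` is simple; moreover if `H = α θ^ℓ` with
`α ≠ 0`, `ℓ ≥ 1`, then `G` has at most one positive and at most one negative real root. -/
theorem simple_roots_of_bracket_nonvanishing (G H : Polynomial ℝ)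
    (hB : ∀ c : ℝ, c ≠ 0 → (derivative G * H - G * derivative H).eval c ≠ 0) :
    (∀ c : ℝ, c ≠ 0 → G.IsRoot c → G.rootMultiplicity c = 1) ∧
    (∀ (α : ℝ), α ≠ 0 → ∀ ℓ : ℕ, 1 ≤ ℓ → H = C α * X ^ ℓ →
      (∀ c₁ c₂ : ℝ, 0 < c₁ → 0 < c₂ → G.IsRoot c₁ → G.IsRoot c₂ → c₁ = c₂) ∧
      (∀ c₁ c₂ : ℝ, c₁ < 0 → c₂ < 0 → G.IsRoot c₁ → G.IsRoot c₂ → c₁ = c₂)) := by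
  constructor
  · intro c hc hroot
    have hG : G ≠ 0 := by
      rintro rfl
      exact hB 1 one_ne_zero (by simp)
    have hd : eval c (derivative G) ≠ 0 := by
      intro h
      apply hB c hc
      simp [hroot.eq_zero, h]
    have h1 : 0 < G.rootMultiplicity c := (rootMultiplicity_pos hG).mpr hroot
    have h2 := derivative_rootMultiplicity_of_root hroot
    by_contra hne
    have h3 : 0 < (derivative G).rootMultiplicity c := by omega
    exact hd (rootMultiplicity_pos'.mp h3).2
  · intro α hα ℓ hℓ hH
    have key : ∀ a b : ℝ, a < b → (∀ x ∈ Set.Icc a b, x ≠ 0) →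
        G.IsRoot a → G.IsRoot b → False := by
      intro a b hab h0 ha hb
      obtain ⟨d, hd, hnum⟩ := rolle_key G ℓ a b hab h0 ha hb
      apply hB d (h0 d (Set.mem_Icc_of_Ioo hd))
      subst hH
      simp only [derivative_C_mul, derivative_X_pow, eval_sub, eval_mul, eval_C, eval_pow,
        eval_X, eval_natCast]
      linear_combination α * hnum
    constructor
    · intro c₁ c₂ h1 h2 r1 r2
      by_contra hne
      rcases Ne.lt_or_gt hne with h | h
      · exact key c₁ c₂ h (fun x hx => ne_of_gt (lt_of_lt_of_le h1 hx.1)) r1 r2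
      · exact key c₂ c₁ h (fun x hx => ne_of_gt (lt_of_lt_of_le h2 hx.1)) r2 r1
    · intro c₁ c₂ h1 h2 r1 r2
      by_contra hne
      rcases Ne.lt_or_gt hne with h | h
      · exact key c₁ c₂ h (fun x hx => ne_of_lt (lt_of_le_of_lt hx.2 h2)) r1 r2
      · exact key c₂ c₁ h (fun x hx => ne_of_lt (lt_of_le_of_lt hx.2 h1)) r2 r1
end

section
/- Let f(ρ,θ) be a nonzero real-analytic function near the origin without the factor ρ. If the Newton polygon N_f has an edge E whose edge-polynomial f_E has a nonzero real root of odd multiplicity, then f is not semi-definite: for every ε > 0, f takes both positive and negative values on Ω_ε = {(ρ,θ) : 0 < ρ < ε, |θ| < ε}. -/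
/-!
Along the weighted curve `ρ = t ^ q`, `θ = θ₀ * t ^ p` the series of `f` becomes
`Σ a_{ij} θ₀ ^ j t ^ (q i + p j)`. Every exponent is at least `ς`, with equality exactly on
the edge, so `f (t ^ q) (θ₀ * t ^ p) / t ^ ς → f_E(θ₀)` as `t → 0⁺`: the remaining terms are
`O(t)` relative to `t ^ ς`, by comparison with the absolutely convergent series at a fixed
`t₀`. A root of odd multiplicity makes `f_E` change sign, and the two choices of `θ₀` give
points of either sign arbitrarily close to the origin.
-/

/-- Edge-polynomial `f_E(θ) = Σ_{(i,j) ∈ E ∩ Δ(f)} a_{i,j} θ^j` for the edge of the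
Newton polygon lying on the line `q·u + p·v = ς`. -/
noncomputable def edgePolyA (a : ℕ × ℕ → ℝ) (p q ς : ℕ) : Polynomial ℝ :=
  ∑ᶠ mn ∈ {mn : ℕ × ℕ | a mn ≠ 0 ∧ q * mn.1 + p * mn.2 = ς},
    Polynomial.C (a mn) * Polynomial.X ^ mn.2

open Filter Topology Polynomial

theorem Polynomial.exists_eval_pos_and_neg_of_odd_rootMultiplicity {P : ℝ[X]} {c : ℝ}
    (hodd : Odd (P.rootMultiplicity c)) : ∃ x y, 0 < P.eval x ∧ P.eval y < 0 := by
  have hP : P ≠ 0 := by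
    rintro rfl
    simp at hodd
  set k := P.rootMultiplicity c
  set Q := P /ₘ (X - C c) ^ k
  have hQc : Q.eval c ≠ 0 := eval_divByMonic_pow_rootMultiplicity_ne_zero c hP
  have hPQ : ∀ x, P.eval x = (x - c) ^ k * Q.eval x := fun x => by
    simpa using congrArg (eval x) (pow_mul_divByMonic_rootMultiplicity_eq P c).symm
  have hQQ : Tendsto (fun d => Q.eval (c + d) * Q.eval (c - d)) (𝓝[>] 0) (𝓝 (Q.eval c ^ 2)) := by
    have : Continuous fun d => Q.eval (c + d) * Q.eval (c - d) := by fun_prop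
    simpa [sq] using (this.tendsto 0).mono_left nhdsWithin_le_nhds
  obtain ⟨d, hd, hQd⟩ :=
    (eventually_mem_nhdsWithin.and (hQQ.eventually_const_lt (by positivity))).exists
  have hPP : P.eval (c + d) * P.eval (c - d) < 0 := by
    have hdk : 0 < d ^ k := pow_pos hd k
    rw [hPQ, hPQ, add_sub_cancel_left, sub_sub_cancel_left, hodd.neg_pow]
    nlinarith [mul_pos (mul_pos hdk hdk) hQd]
  rcases mul_neg_iff.1 hPP with ⟨hx, hy⟩ | ⟨hy, hx⟩
  exacts [⟨_, _, hx, hy⟩, ⟨_, _, hx, hy⟩]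

section LeadingTerm

variable {ι : Type*} {b : ι → ℝ} {w : ι → ℕ} {s : Finset ι} {n : ℕ}

theorem abs_sub_sum_mul_pow_le (hs : ∀ i ∈ s, w i = n) (hw : ∀ i ∉ s, b i ≠ 0 → n < w i)
    {t t₀ F : ℝ} (ht : 0 ≤ t) (ht₀ : 0 < t₀) (htt₀ : t ≤ t₀)
    (hF : HasSum (fun i => b i * t ^ w i) F) (h₀ : Summable fun i => b i * t₀ ^ w i) :
    |F - (∑ i ∈ s, b i) * t ^ n| ≤ (t / t₀) ^ (n + 1) * ∑' i, |b i * t₀ ^ w i| := by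
  classical
  have hs' : HasSum (fun i => if i ∈ s then b i * t ^ w i else 0) ((∑ i ∈ s, b i) * t ^ n) := by
    have hsum : ∑ i ∈ s, (if i ∈ s then b i * t ^ w i else 0) = (∑ i ∈ s, b i) * t ^ n := by
      rw [Finset.sum_mul]
      exact Finset.sum_congr rfl fun i hi => by rw [if_pos hi, hs i hi]
    exact hsum ▸ hasSum_sum_of_ne_finset_zero fun i hi => if_neg hi
  refine (hF.sub hs').norm_le_of_bounded (h₀.abs.hasSum.mul_left _) fun i => ?_
  rw [Real.norm_eq_abs]
  by_cases hi : i ∈ s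
  · simp only [if_pos hi, sub_self, abs_zero]
    positivity
  by_cases hbi : b i = 0
  · simp [hbi]
  have hr : t / t₀ ≤ 1 := (div_le_one ht₀).2 htt₀
  calc |b i * t ^ w i - if i ∈ s then b i * t ^ w i else 0|
      = (t / t₀) ^ w i * |b i * t₀ ^ w i| := by
        rw [if_neg hi, sub_zero, div_pow, abs_mul, abs_mul, abs_of_nonneg (pow_nonneg ht _),
          abs_of_pos (pow_pos ht₀ _)]
        field_simp
    _ ≤ (t / t₀) ^ (n + 1) * |b i * t₀ ^ w i| :=
        mul_le_mul_of_nonneg_right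
          (pow_le_pow_of_le_one (by positivity) hr (hw i hi hbi)) (abs_nonneg _)

theorem tendsto_div_pow_of_hasSum_mul_pow (hs : ∀ i ∈ s, w i = n)
    (hw : ∀ i ∉ s, b i ≠ 0 → n < w i) {F : ℝ → ℝ}
    (hF : ∀ᶠ t in 𝓝[>] 0, HasSum (fun i => b i * t ^ w i) (F t)) :
    Tendsto (fun t => F t / t ^ n) (𝓝[>] 0) (𝓝 (∑ i ∈ s, b i)) := by
  obtain ⟨t₀, ht₀, hF₀⟩ := (eventually_mem_nhdsWithin.and hF).exists
  set C := ∑' i, |b i * t₀ ^ w i|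
  have hbound : ∀ᶠ t in 𝓝[>] 0, |F t / t ^ n - ∑ i ∈ s, b i| ≤ t * (C / t₀ ^ (n + 1)) := by
    filter_upwards [hF, Ioo_mem_nhdsGT ht₀] with t hFt htt₀
    have htn : 0 < t ^ n := pow_pos htt₀.1 n
    calc |F t / t ^ n - ∑ i ∈ s, b i| = |F t - (∑ i ∈ s, b i) * t ^ n| / t ^ n := by
          rw [div_sub' htn.ne', abs_div, abs_of_pos htn, mul_comm]
      _ ≤ (t / t₀) ^ (n + 1) * C / t ^ n := by
          gcongr
          exact abs_sub_sum_mul_pow_le hs hw htt₀.1.le ht₀ htt₀.2.le hFt hF₀.summable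
      _ = t * (C / t₀ ^ (n + 1)) := by
          field_simp
          ring
  rw [tendsto_iff_norm_sub_tendsto_zero]
  refine squeeze_zero' (Eventually.of_forall fun _ => norm_nonneg _) hbound ?_
  exact ((continuous_mul_const _).tendsto' 0 0 (zero_mul _)).mono_left nhdsWithin_le_nhds

end LeadingTerm

theorem finite_setOf_weight_eq {p q : ℕ} (hp : 0 < p) (hq : 0 < q) (ς : ℕ) :
    {mn : ℕ × ℕ | q * mn.1 + p * mn.2 = ς}.Finite :=
  (Set.finite_Iic (ς, ς)).subset fun _ h =>
    ⟨(Nat.le_mul_of_pos_left _ hq).trans (h ▸ Nat.le_add_right _ _),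
     (Nat.le_mul_of_pos_left _ hp).trans (h ▸ Nat.le_add_left _ _)⟩

theorem eval_edgePolyA {a : ℕ × ℕ → ℝ} {p q ς : ℕ}
    (hfin : {mn : ℕ × ℕ | a mn ≠ 0 ∧ q * mn.1 + p * mn.2 = ς}.Finite) (x : ℝ) :
    (edgePolyA a p q ς).eval x = ∑ mn ∈ hfin.toFinset, a mn * x ^ mn.2 := by
  rw [edgePolyA, finsum_mem_eq_finite_toFinset_sum _ hfin, eval_finsetSum]
  simp

theorem eventually_abs_mul_pow_lt {ε : ℝ} (hε : 0 < ε) {k : ℕ} (hk : 0 < k) (c : ℝ) :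
    ∀ᶠ t in 𝓝 (0 : ℝ), |c * t ^ k| < ε :=
  ((continuous_const.mul (continuous_pow k)).abs.tendsto 0).eventually_lt_const
    (by simpa [zero_pow hk.ne'] using hε)

theorem tendsto_div_pow_edgePolyA {f : ℝ → ℝ → ℝ} {a : ℕ × ℕ → ℝ} {ε : ℝ} (hε : 0 < ε)
    (hsum : ∀ ρ θ : ℝ, |ρ| < ε → |θ| < ε →
      HasSum (fun mn : ℕ × ℕ => a mn * ρ ^ mn.1 * θ ^ mn.2) (f ρ θ))
    {p q ς : ℕ} (hp : 0 < p) (hq : 0 < q)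
    (hline : ∀ mn : ℕ × ℕ, a mn ≠ 0 → ς ≤ q * mn.1 + p * mn.2) (θ₀ : ℝ) :
    Tendsto (fun t => f (t ^ q) (θ₀ * t ^ p) / t ^ ς) (𝓝[>] 0)
      (𝓝 ((edgePolyA a p q ς).eval θ₀)) := by
  have hfin : {mn : ℕ × ℕ | a mn ≠ 0 ∧ q * mn.1 + p * mn.2 = ς}.Finite :=
    (finite_setOf_weight_eq hp hq ς).subset fun _ h => h.2
  rw [eval_edgePolyA hfin]
  refine tendsto_div_pow_of_hasSum_mul_pow (w := fun mn => q * mn.1 + p * mn.2)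
    (fun mn h => (hfin.mem_toFinset.1 h).2) (fun mn h hb => ?_) ?_
  · have ha : a mn ≠ 0 := left_ne_zero_of_mul hb
    exact (hline mn ha).lt_of_ne fun he => h (hfin.mem_toFinset.2 ⟨ha, he.symm⟩)
  · filter_upwards [nhdsWithin_le_nhds
      ((eventually_abs_mul_pow_lt hε hq 1).and (eventually_abs_mul_pow_lt hε hp θ₀))]
      with t ⟨hρ, hθ⟩
    convert hsum (t ^ q) (θ₀ * t ^ p) (by simpa using hρ) hθ using 2 with mn
    ring

theorem not_semidefinite_of_odd_root_general (f : ℝ → ℝ → ℝ) (a : ℕ × ℕ → ℝ)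
    (ε : ℝ) (hε : 0 < ε)
    (hsum : ∀ ρ θ : ℝ, |ρ| < ε → |θ| < ε →
      HasSum (fun mn : ℕ × ℕ => a mn * ρ ^ mn.1 * θ ^ mn.2) (f ρ θ))
    (p q ς : ℕ) (hp : 0 < p) (hq : 0 < q)
    (hline : ∀ mn : ℕ × ℕ, a mn ≠ 0 → ς ≤ q * mn.1 + p * mn.2)
    (c : ℝ)
    (hodd : Odd ((edgePolyA a p q ς).rootMultiplicity c)) :
    ∀ ε' : ℝ, 0 < ε' →
      (∃ ρ₁ θ₁ : ℝ, 0 < ρ₁ ∧ ρ₁ < ε' ∧ |θ₁| < ε' ∧ 0 < f ρ₁ θ₁) ∧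
      (∃ ρ₂ θ₂ : ℝ, 0 < ρ₂ ∧ ρ₂ < ε' ∧ |θ₂| < ε' ∧ f ρ₂ θ₂ < 0) := by
  intro ε' hε'
  obtain ⟨x, y, hx, hy⟩ := exists_eval_pos_and_neg_of_odd_rootMultiplicity hodd
  have hcurve := tendsto_div_pow_edgePolyA hε hsum hp hq hline
  have hsmall : ∀ θ₀, ∀ᶠ t in 𝓝[>] (0 : ℝ), 0 < t ∧ |1 * t ^ q| < ε' ∧ |θ₀ * t ^ p| < ε' :=
    fun θ₀ => eventually_mem_nhdsWithin.and <| nhdsWithin_le_nhds <|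
      (eventually_abs_mul_pow_lt hε' hq 1).and (eventually_abs_mul_pow_lt hε' hp θ₀)
  constructor
  · obtain ⟨t, ⟨ht, hρ, hθ⟩, hf⟩ := ((hsmall x).and ((hcurve x).eventually_const_lt hx)).exists
    exact ⟨t ^ q, x * t ^ p, pow_pos ht q, (le_abs_self _).trans_lt (by simpa using hρ), hθ,
      (div_pos_iff_of_pos_right (pow_pos ht ς)).1 hf⟩
  · obtain ⟨t, ⟨ht, hρ, hθ⟩, hf⟩ := ((hsmall y).and ((hcurve y).eventually_lt_const hy)).exists
    exact ⟨t ^ q, y * t ^ p, pow_pos ht q, (le_abs_self _).trans_lt (by simpa using hρ), hθ,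
      neg_of_div_neg_left hf (pow_nonneg ht.le ς)⟩

/-- if an edge-polynomial of the Newton polygon of a nonzero
real-analytic `f` (without the factor `ρ`) has a nonzero real root of odd
multiplicity, then `f` is not semi-definite: it takes both signs on every `Ω_ε`. -/
theorem not_semidefinite_of_odd_root (f : ℝ → ℝ → ℝ) (a : ℕ × ℕ → ℝ)
    (ε : ℝ) (hε : 0 < ε)
    (hsum : ∀ ρ θ : ℝ, |ρ| < ε → |θ| < ε →
      HasSum (fun mn : ℕ × ℕ => a mn * ρ ^ mn.1 * θ ^ mn.2) (f ρ θ))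
    (hnofactρ : ∃ j : ℕ, a (0, j) ≠ 0)
    (p q ς : ℕ) (hp : 0 < p) (hq : 0 < q) (hcop : Nat.Coprime p q)
    (hline : ∀ mn : ℕ × ℕ, a mn ≠ 0 → ς ≤ q * mn.1 + p * mn.2)
    (hedge : ∃ mn mn' : ℕ × ℕ, mn ≠ mn' ∧ a mn ≠ 0 ∧ a mn' ≠ 0 ∧
      q * mn.1 + p * mn.2 = ς ∧ q * mn'.1 + p * mn'.2 = ς)
    (c : ℝ) (hc : c ≠ 0)
    (hodd : Odd ((edgePolyA a p q ς).rootMultiplicity c)) :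
    ∀ ε' : ℝ, 0 < ε' →
      (∃ ρ₁ θ₁ : ℝ, 0 < ρ₁ ∧ ρ₁ < ε' ∧ |θ₁| < ε' ∧ 0 < f ρ₁ θ₁) ∧
      (∃ ρ₂ θ₂ : ℝ, 0 < ρ₂ ∧ ρ₂ < ε' ∧ |θ₂| < ε' ∧ f ρ₂ θ₂ < 0) :=
  not_semidefinite_of_odd_root_general f a ε hε hsum p q ς hp hq hline c hodd
end

section
/- Let f(ρ,θ) be real-analytic near the origin whose Newton polygon N_f is a single vertex V₀ = (i₀, j₀) with j₀ even and coefficient a_{i₀,j₀} > 0. Then f is semi-positive: there exists ε > 0 such that f(ρ,θ) ≥ 0 for all 0 < ρ < ε and |θ| < ε. -/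
/-- if the Newton polygon of a real-analytic `f` is the single vertex
`(i₀,j₀)` with `j₀` even and `a_{i₀,j₀} > 0`, then `f` is semi-positive on some
`Ω_ε = {0 < ρ < ε, |θ| < ε}`. -/
theorem semipositive_of_single_vertex (f : ℝ → ℝ → ℝ) (a : ℕ × ℕ → ℝ)
    (r : ℝ) (hr : 0 < r)
    (hsum : ∀ ρ θ : ℝ, |ρ| < r → |θ| < r →
      HasSum (fun mn : ℕ × ℕ => a mn * ρ ^ mn.1 * θ ^ mn.2) (f ρ θ))
    (i0 j0 : ℕ) (hj0 : Even j0) (ha : 0 < a (i0, j0))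
    (hvert : ∀ mn : ℕ × ℕ, a mn ≠ 0 → i0 ≤ mn.1 ∧ j0 ≤ mn.2) :
    ∃ ε : ℝ, 0 < ε ∧ ∀ ρ θ : ℝ, 0 < ρ → ρ < ε → |θ| < ε → 0 ≤ f ρ θ := by
  set s : ℝ := r / 2 with hs_def
  have hs : 0 < s := by positivity
  have hsr : s < r := by rw [hs_def]; linarith
  have hss : |s| < r := by rwa [abs_of_pos hs]
  have husum : Summable (fun mn : ℕ × ℕ => a mn * s ^ mn.1 * s ^ mn.2) :=
    (hsum s s hss hss).summable
  have habs : Summable (fun mn : ℕ × ℕ => |a mn * s ^ mn.1 * s ^ mn.2|) := husum.abs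
  set T : ℝ := ∑' mn : ℕ × ℕ, |a mn * s ^ mn.1 * s ^ mn.2| with hT_def
  have hT0 : 0 ≤ T := tsum_nonneg fun _ => abs_nonneg _
  set A : ℝ := a (i0, j0) with hA_def
  set c : ℝ := s ^ (i0 + j0 + 1) with hc_def
  have hc : 0 < c := pow_pos hs _
  have hε0 : (0:ℝ) < min s (A * c / (T + 1)) := lt_min hs (by positivity)
  refine ⟨min s (A * c / (T + 1)), hε0, fun ρ θ hρ hρε hθε => ?_⟩
  set ε : ℝ := min s (A * c / (T + 1)) with hε_def
  have hεs : ε ≤ s := min_le_left _ _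
  have hεc : ε * (T + 1) ≤ A * c := by
    have h := min_le_right s (A * c / (T + 1))
    rw [le_div_iff₀ (by linarith : (0:ℝ) < T + 1)] at h
    exact h
  have hρs : ρ ≤ s := le_trans hρε.le hεs
  have hθs : |θ| ≤ s := le_trans hθε.le hεs
  have hρr : |ρ| < r := by rw [abs_of_pos hρ]; linarith
  have hθr : |θ| < r := lt_of_le_of_lt hθs hsr
  have hv := hsum ρ θ hρr hθr
  set v : ℕ × ℕ → ℝ := fun mn => a mn * ρ ^ mn.1 * θ ^ mn.2 with hv_def
  set K : ℝ := ρ ^ i0 * |θ| ^ j0 * ε / c with hK_def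
  have hK0 : 0 ≤ K := by
    apply div_nonneg _ hc.le
    have := abs_nonneg θ
    positivity
  -- termwise bound on the tail
  have hterm : ∀ mn : ℕ × ℕ,
      -(K * |a mn * s ^ mn.1 * s ^ mn.2|) ≤ (if mn = (i0, j0) then 0 else v mn) := by
    intro mn
    by_cases hmn : mn = (i0, j0)
    · rw [if_pos hmn]
      have : 0 ≤ K * |a mn * s ^ mn.1 * s ^ mn.2| :=
        mul_nonneg hK0 (abs_nonneg _)
      linarith
    · rw [if_neg hmn]
      by_cases haz : a mn = 0
      · simp [hv_def, haz]
      · obtain ⟨hm, hn⟩ := hvert mn haz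
        obtain ⟨m, n⟩ := mn
        simp only at hm hn
        have hne : ¬(m = i0 ∧ n = j0) := by simpa [Prod.ext_iff] using hmn
        obtain ⟨p, hp⟩ : ∃ p, m = i0 + p := ⟨m - i0, by omega⟩
        obtain ⟨q, hq⟩ : ∃ q, n = j0 + q := ⟨n - j0, by omega⟩
        have hk1 : 1 ≤ p + q := by omega
        -- core power inequality
        have core : ρ ^ m * |θ| ^ n * c ≤ ρ ^ i0 * |θ| ^ j0 * ε * (s ^ m * s ^ n) := by
          have h1 : ρ ^ m * |θ| ^ n ≤ ρ ^ i0 * |θ| ^ j0 * (ε ^ (p + q)) := by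
            have hρp : ρ ^ p ≤ ε ^ p := pow_le_pow_left₀ hρ.le hρε.le p
            have hθq : |θ| ^ q ≤ ε ^ q := pow_le_pow_left₀ (abs_nonneg θ) hθε.le q
            calc ρ ^ m * |θ| ^ n = (ρ ^ i0 * |θ| ^ j0) * (ρ ^ p * |θ| ^ q) := by
                  rw [hp, hq, pow_add, pow_add]; ring
              _ ≤ (ρ ^ i0 * |θ| ^ j0) * (ε ^ p * ε ^ q) := by
                  apply mul_le_mul_of_nonneg_left _ (by positivity)
                  exact mul_le_mul hρp hθq (by positivity) (by positivity)
              _ = ρ ^ i0 * |θ| ^ j0 * ε ^ (p + q) := by rw [pow_add]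
          obtain ⟨k, hk⟩ : ∃ k, p + q = k + 1 := ⟨p + q - 1, by omega⟩
          have h2 : ε ^ (p + q) * c ≤ ε * (s ^ m * s ^ n) := by
            have h3 : ε ^ (p + q) ≤ ε * s ^ k := by
              calc ε ^ (p + q) = ε * ε ^ k := by rw [hk, pow_succ']
                _ ≤ ε * s ^ k :=
                    mul_le_mul_of_nonneg_left (pow_le_pow_left₀ hε0.le hεs _) hε0.le
            calc ε ^ (p + q) * c ≤ (ε * s ^ k) * c :=
                  mul_le_mul_of_nonneg_right h3 hc.le
              _ = ε * (s ^ m * s ^ n) := by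
                  rw [hc_def, ← pow_add, mul_assoc, ← pow_add]
                  congr 2
                  omega
          calc ρ ^ m * |θ| ^ n * c ≤ ρ ^ i0 * |θ| ^ j0 * ε ^ (p + q) * c :=
                mul_le_mul_of_nonneg_right h1 hc.le
            _ = (ρ ^ i0 * |θ| ^ j0) * (ε ^ (p + q) * c) := by ring
            _ ≤ (ρ ^ i0 * |θ| ^ j0) * (ε * (s ^ m * s ^ n)) := by
                apply mul_le_mul_of_nonneg_left h2 (by positivity)
            _ = ρ ^ i0 * |θ| ^ j0 * ε * (s ^ m * s ^ n) := by ring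
        have key : |a (m, n)| * (ρ ^ m * |θ| ^ n) ≤ K * |a (m, n) * s ^ m * s ^ n| := by
          have habs2 : |a (m, n) * s ^ m * s ^ n| = |a (m, n)| * (s ^ m * s ^ n) := by
            rw [abs_mul, abs_mul, abs_pow, abs_pow, abs_of_pos hs]; ring
          rw [habs2, hK_def, div_mul_eq_mul_div, le_div_iff₀ hc]
          have := mul_le_mul_of_nonneg_left core (abs_nonneg (a (m, n)))
          nlinarith [this]
        have habsv : |v (m, n)| = |a (m, n)| * (ρ ^ m * |θ| ^ n) := by
          simp only [hv_def]
          rw [abs_mul, abs_mul, abs_pow, abs_pow, abs_of_pos hρ]; ring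
        have := neg_abs_le (v (m, n))
        rw [habsv] at this
        linarith [key]
  have hbound_summ : Summable (fun mn : ℕ × ℕ => K * |a mn * s ^ mn.1 * s ^ mn.2|) :=
    habs.mul_left K
  have hw_summ : Summable (fun mn : ℕ × ℕ => if mn = (i0, j0) then 0 else v mn) := by
    have h1 : Summable (fun mn : ℕ × ℕ => v mn - if mn = (i0, j0) then v (i0, j0) else 0) :=
      hv.summable.sub (hasSum_ite_eq (i0, j0) (v (i0, j0))).summable
    apply h1.congr
    intro mn
    by_cases h : mn = (i0, j0) <;> simp [h]
  have hts : -(K * T) ≤ ∑' mn : ℕ × ℕ, if mn = (i0, j0) then 0 else v mn := by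
    have h := Summable.tsum_le_tsum hterm hbound_summ.neg hw_summ
    calc -(K * T) = ∑' mn : ℕ × ℕ, -(K * |a mn * s ^ mn.1 * s ^ mn.2|) := by
          rw [tsum_neg, tsum_mul_left]
      _ ≤ _ := h
  have hfeq : f ρ θ = v (i0, j0) + ∑' mn : ℕ × ℕ, if mn = (i0, j0) then 0 else v mn := by
    rw [← hv.tsum_eq]
    exact Summable.tsum_eq_add_tsum_ite hv.summable (i0, j0)
  have hv0 : v (i0, j0) = A * (ρ ^ i0 * |θ| ^ j0) := by
    simp only [hv_def]
    rw [hj0.pow_abs]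
    ring
  have hKT : K * T ≤ A * (ρ ^ i0 * |θ| ^ j0) := by
    rw [hK_def, div_mul_eq_mul_div, div_le_iff₀ hc]
    have h1 : ε * T ≤ A * c := by nlinarith [hε0]
    have hP : (0:ℝ) ≤ ρ ^ i0 * |θ| ^ j0 := by positivity
    nlinarith [mul_le_mul_of_nonneg_left h1 hP]
  rw [hfeq]
  linarith [hts, hKT, hv0]
end

section
/- Let Φ(ρ,θ) be real-analytic on a region U and suppose ∂/∂θ (G/H)(ρ,θ) ≤ 0 for all (ρ,θ) in the set U_k = {(ρ,θ) : 0 < ρ < ε, θ_k(ρ) < θ < θ_{k-1}(ρ)} where G, H are real-analytic, H ≠ 0 on U_k, and θ_k < θ_{k-1} are continuous on (0,ε) with θ_k(0) = θ_{k-1}(0) = 0. If θ̃₁(ρ), θ̃₂(ρ) are two C¹ solutions of dθ/dρ = G(ρ,θ)/(ρ H(ρ,θ)) on (0,ε) lying in U_k with θ̃₁(0⁺) = θ̃₂(0⁺) = 0, then θ̃₁ ≡ θ̃₂ on (0,ε). -/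
open Filter Topology

/-- uniqueness of the orbit in a Z-sector.  If `∂/∂θ (G/H) ≤ 0` on the
sector `U_k = {0 < ρ < ε, θ_k(ρ) < θ < θ_{k−1}(ρ)}` (where `H ≠ 0`), then two `C¹`
solutions of `dθ/dρ = G(ρ,θ)/(ρ H(ρ,θ))` lying in `U_k` with common limit `0` as
`ρ → 0⁺` coincide on `(0,ε)`. -/
theorem orbit_uniqueness (G H : ℝ → ℝ → ℝ) (ε : ℝ) (hε : 0 < ε)
    (θk θk1 : ℝ → ℝ)
    (hcont_k : ContinuousOn θk (Set.Ioo 0 ε)) (hcont_k1 : ContinuousOn θk1 (Set.Ioo 0 ε))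
    (hθk0 : Tendsto θk (nhdsWithin 0 (Set.Ioi 0)) (nhds 0))
    (hθk10 : Tendsto θk1 (nhdsWithin 0 (Set.Ioi 0)) (nhds 0))
    (hord : ∀ ρ : ℝ, 0 < ρ → ρ < ε → θk ρ < θk1 ρ)
    (hH : ∀ ρ θ : ℝ, 0 < ρ → ρ < ε → θk ρ < θ → θ < θk1 ρ → H ρ θ ≠ 0)
    (hdiff : ∀ ρ θ : ℝ, 0 < ρ → ρ < ε → θk ρ < θ → θ < θk1 ρ →
      DifferentiableAt ℝ (fun t => G ρ t / H ρ t) θ)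
    (hderiv : ∀ ρ θ : ℝ, 0 < ρ → ρ < ε → θk ρ < θ → θ < θk1 ρ →
      deriv (fun t => G ρ t / H ρ t) θ ≤ 0)
    (y1 y2 : ℝ → ℝ)
    (hy1 : ∀ ρ : ℝ, 0 < ρ → ρ < ε →
      HasDerivAt y1 (G ρ (y1 ρ) / (ρ * H ρ (y1 ρ))) ρ)
    (hy2 : ∀ ρ : ℝ, 0 < ρ → ρ < ε →
      HasDerivAt y2 (G ρ (y2 ρ) / (ρ * H ρ (y2 ρ))) ρ)
    (hin1 : ∀ ρ : ℝ, 0 < ρ → ρ < ε → θk ρ < y1 ρ ∧ y1 ρ < θk1 ρ)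
    (hin2 : ∀ ρ : ℝ, 0 < ρ → ρ < ε → θk ρ < y2 ρ ∧ y2 ρ < θk1 ρ)
    (hlim1 : Tendsto y1 (nhdsWithin 0 (Set.Ioi 0)) (nhds 0))
    (hlim2 : Tendsto y2 (nhdsWithin 0 (Set.Ioi 0)) (nhds 0)) :
    ∀ ρ : ℝ, 0 < ρ → ρ < ε → y1 ρ = y2 ρ := by

  -- Set q s = (y2 s - y1 s)^2; show it is antitone and tends to 0 at 0⁺.
  set q : ℝ → ℝ := fun s => (y2 s - y1 s) ^ 2 with hq
  -- derivative of q at each point of (0, ε)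
  have hqderiv : ∀ s : ℝ, 0 < s → s < ε →
      HasDerivAt q (2 * (y2 s - y1 s) ^ 1 *
        (G s (y2 s) / (s * H s (y2 s)) - G s (y1 s) / (s * H s (y1 s)))) s := by
    intro s hs hsε
    exact ((hy2 s hs hsε).sub (hy1 s hs hsε)).pow 2
  -- antitonicity of f s = G s · / H s · on the fiber interval
  have hanti : ∀ s : ℝ, 0 < s → s < ε →
      AntitoneOn (fun t => G s t / H s t) (Set.Ioo (θk s) (θk1 s)) := by
    intro s hs hsε
    apply antitoneOn_of_deriv_nonpos (convex_Ioo _ _)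
    · intro t ht
      exact (hdiff s t hs hsε ht.1 ht.2).continuousAt.continuousWithinAt
    · intro t ht
      rw [interior_Ioo] at ht
      exact (hdiff s t hs hsε ht.1 ht.2).differentiableWithinAt
    · intro t ht
      rw [interior_Ioo] at ht
      exact hderiv s t hs hsε ht.1 ht.2
  -- hence deriv q ≤ 0 on (0, ε)
  have hqnonpos : ∀ s : ℝ, 0 < s → s < ε → deriv q s ≤ 0 := by
    intro s hs hsε
    rw [(hqderiv s hs hsε).deriv]
    have h1 := hin1 s hs hsε
    have h2 := hin2 s hs hsε
    have key : (y2 s - y1 s) * (G s (y2 s) / H s (y2 s) - G s (y1 s) / H s (y1 s)) ≤ 0 := by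
      rcases le_total (y1 s) (y2 s) with hle | hle
      · have := hanti s hs hsε ⟨h1.1, h1.2⟩ ⟨h2.1, h2.2⟩ hle
        exact mul_nonpos_of_nonneg_of_nonpos (by linarith) (by linarith)
      · have := hanti s hs hsε ⟨h2.1, h2.2⟩ ⟨h1.1, h1.2⟩ hle
        exact mul_nonpos_of_nonpos_of_nonneg (by linarith) (by linarith)
    have hrw : G s (y2 s) / (s * H s (y2 s)) - G s (y1 s) / (s * H s (y1 s))
        = (G s (y2 s) / H s (y2 s) - G s (y1 s) / H s (y1 s)) / s := by
      rw [sub_div]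
      congr 1 <;> rw [div_mul_eq_div_div_swap]
    rw [hrw, pow_one]
    have : 2 * (y2 s - y1 s) * ((G s (y2 s) / H s (y2 s) - G s (y1 s) / H s (y1 s)) / s)
        = (2 / s) * ((y2 s - y1 s) * (G s (y2 s) / H s (y2 s) - G s (y1 s) / H s (y1 s))) := by
      field_simp
    rw [this]
    exact mul_nonpos_of_nonneg_of_nonpos (by positivity) key
  -- q is antitone on (0, ε)
  have hqanti : AntitoneOn q (Set.Ioo 0 ε) := by
    apply antitoneOn_of_deriv_nonpos (convex_Ioo _ _)
    · intro s hs
      exact (hqderiv s hs.1 hs.2).differentiableAt.continuousAt.continuousWithinAt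
    · intro s hs
      rw [interior_Ioo] at hs
      exact (hqderiv s hs.1 hs.2).differentiableAt.differentiableWithinAt
    · intro s hs
      rw [interior_Ioo] at hs
      exact hqnonpos s hs.1 hs.2
  -- q tends to 0 at 0⁺
  have hqlim : Tendsto q (nhdsWithin 0 (Set.Ioi 0)) (nhds 0) := by
    have := (hlim2.sub hlim1).pow 2
    simpa using this
  intro ρ hρ hρε
  have hle : q ρ ≤ 0 := by
    apply ge_of_tendsto hqlim
    filter_upwards [Ioo_mem_nhdsGT_of_mem (Set.mem_Ico.mpr ⟨le_refl 0, hρ⟩)] with s hs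
    exact hqanti ⟨hs.1, hs.2.trans hρε⟩ ⟨hρ, hρε⟩ hs.2.le
  have hge : 0 ≤ q ρ := sq_nonneg _
  have : (y2 ρ - y1 ρ) ^ 2 = 0 := le_antisymm hle hge
  have := pow_eq_zero_iff (n := 2) (by norm_num) |>.mp this
  linarith [sub_eq_zero.mp this]
end
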